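/- Let (W,S) be a Coxeter system and w ∈ W a straight element with reduced expression w = s_{j_1}⋯s_{j_k}. Set β_i = s_{j_1}⋯s_{j_{i−1}}(e_{j_i}) for 1 ≤ i ≤ k (so β_1 = e_{j_1}). Then for every m ≥ 1 and every i, the root w^m(β_i) is positive; that is, β_i ∈ Φ⁺(w⁻¹) but β_i ∉ Φ⁺(w^m) for all m ≥ 1. -/

import Mathlib

open List

namespace CoxPaper

/-- Irreducibility of a Coxeter matrix: connectedness of the Coxeter diagram, the graph
on `B` with an edge between distinct `i`, `j` whenever `M i j ≠ 2`. -/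
def IsIrreducible {B : Type*} (M : CoxeterMatrix B) : Prop :=
  (SimpleGraph.fromRel (fun i j => M i j ≠ 2)).Connected

variable {B : Type*} {W : Type*} [Group W] {M : CoxeterMatrix B}

/-- The standard parabolic subgroup `W_I` generated by the simple reflections indexed by `I`. -/
def stdParabolic (cs : CoxeterSystem M W) (I : Set B) : Subgroup W :=
  Subgroup.closure (cs.simple '' I)

/-- A parabolic subgroup: a conjugate of a standard parabolic subgroup. -/
def IsParabolic (cs : CoxeterSystem M W) (P : Subgroup W) : Prop :=
  ∃ (w : W) (I : Set B), P = (stdParabolic cs I).map (MulAut.conj w).toMonoidHom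

/-- An element is essential if it lies in no proper parabolic subgroup. -/
def IsEssential (cs : CoxeterSystem M W) (w : W) : Prop :=
  ∀ P : Subgroup W, IsParabolic cs P → P ≠ ⊤ → w ∉ P

/-- A standard Coxeter element: the product of all the simple reflections, each occurring
exactly once, in some order. -/
def IsStdCoxeterElement (cs : CoxeterSystem M W) (w : W) : Prop :=
  ∃ l : List B, l.Nodup ∧ (∀ i : B, i ∈ l) ∧ w = cs.wordProd l

/-- A Coxeter element: any conjugate of a standard Coxeter element. -/
def IsCoxeterElement (cs : CoxeterSystem M W) (w : W) : Prop :=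
  ∃ (x c : W), IsStdCoxeterElement cs c ∧ w = x * c * x⁻¹

/-- Length of a shortest factorization of `w` as a product of elements of `Ts`. -/
noncomputable def reflLengthOn (Ts : Set W) (w : W) : ℕ :=
  sInf {k | ∃ l : List W, l.length = k ∧ (∀ t ∈ l, t ∈ Ts) ∧ l.prod = w}

/-- The reflection length `ℓ_T(w)`. -/
noncomputable def reflLength (cs : CoxeterSystem M W) (w : W) : ℕ :=
  reflLengthOn {t | cs.IsReflection t} w

/-- A reduced reflection factorization of `w`. -/
def IsReducedReflFactorization (cs : CoxeterSystem M W) (w : W) (l : List W) : Prop :=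
  (∀ t ∈ l, cs.IsReflection t) ∧ l.prod = w ∧ l.length = reflLength cs w

/-- The parabolic closure of a subset `X` of `W`: the intersection of all parabolic
subgroups containing `X` (which is the smallest such parabolic subgroup). -/
noncomputable def parabolicClosure (cs : CoxeterSystem M W) (X : Set W) : Subgroup W :=
  sInf {P | IsParabolic cs P ∧ X ⊆ ↑P}

/-- An element `w` is straight if `ℓ(wᵐ) = |m| ℓ(w)` for all integers `m`. -/
def IsStraight (cs : CoxeterSystem M W) (w : W) : Prop :=
  ∀ m : ℤ, cs.length (w ^ m) = m.natAbs * cs.length w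

/-- The standard geometric (Tits) representation of a Coxeter system on a real vector
space `V` with basis `(e_i)` and symmetric bilinear form `B(e_i, e_j) = -cos (π / m_{ij})`
(interpreted as `-1` when `m_{ij} = ∞`, i.e. `M i j = 0`). -/
structure GeomRep (cs : CoxeterSystem M W) (V : Type*) [AddCommGroup V] [Module ℝ V] where
  /-- the simple roots, a basis of `V` -/
  e : Module.Basis B ℝ V
  /-- the bilinear form -/
  BF : V →ₗ[ℝ] V →ₗ[ℝ] ℝ
  /-- the action of `W` on `V` -/
  σ : W →* (V →ₗ[ℝ] V)
  hBF : ∀ i j, BF (e i) (e j) = if M i j = 0 then -1 else -Real.cos (Real.pi / (M i j : ℝ))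
  hσ : ∀ i v, σ (cs.simple i) v = v - (2 * BF (e i) v) • e i

namespace GeomRep

variable {V : Type*} [AddCommGroup V] [Module ℝ V] {cs : CoxeterSystem M W}

/-- Roots. -/
def IsRoot (ρ : GeomRep cs V) (α : V) : Prop := ∃ (w : W) (i : B), α = ρ.σ w (ρ.e i)

/-- Positive roots. -/
def IsPos (ρ : GeomRep cs V) (α : V) : Prop := ρ.IsRoot α ∧ ∀ i, 0 ≤ ρ.e.repr α i

/-- Negative roots. -/
def IsNeg (ρ : GeomRep cs V) (α : V) : Prop := ρ.IsRoot α ∧ ∀ i, ρ.e.repr α i ≤ 0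

/-- The inversion set `Φ⁺(u)`: positive roots sent by `u` to negative roots. -/
def invSet (ρ : GeomRep cs V) (u : W) : Set V := {α | ρ.IsPos α ∧ ρ.IsNeg (ρ.σ u α)}

end GeomRep

end CoxPaper

/-! The roots `β_i = π(l.take i)(e_{l[i]})` are controlled by the basic dichotomy of the geometric
representation: `u(e_s)` has nonnegative coordinates when `ℓ(u s) > ℓ(u)` and nonpositive ones
otherwise. This goes by induction on `ℓ(u)`: for a right descent `t` of `u`, split off the longest
right factor of `u` lying in the dihedral group `⟨s, t⟩`; on `span(e_s, e_t)` that factor acts with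
the Chebyshev coefficients `U_k(cos(π/m)) = sin((k+1)π/m)/sin(π/m) ≥ 0`.

For `w = π(l)` of length `k`, the letter `s = l[i]` is a right descent of `w⁻¹ π(l.take i)`
but not of `x = w^m π(l.take i)`: straightness gives
`ℓ(x s) ≥ ℓ(w^(m+1)) - ℓ(π(l.drop (i+1))) = mk + i + 1 > mk + i ≥ ℓ(x)`. -/

namespace Polynomial.Chebyshev

open Real

theorem U_real_cos_nonneg {θ : ℝ} (hθ : θ ∈ Set.Ioo 0 π) {n : ℤ} (hn : 0 ≤ n + 1)
    (hnθ : (n + 1) * θ ≤ π) : 0 ≤ (U ℝ n).eval (cos θ) := by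
  refine nonneg_of_mul_nonneg_left ?_ (sin_pos_of_pos_of_lt_pi hθ.1 hθ.2)
  rw [U_real_cos]
  exact sin_nonneg_of_nonneg_of_le_pi (mul_nonneg (by exact_mod_cast hn) hθ.1.le) hnθ

end Polynomial.Chebyshev

namespace CoxeterSystem

variable {B W : Type*} [Group W] {M : CoxeterMatrix B} (cs : CoxeterSystem M W)

theorem exists_eq_mul_wordProd_alternatingWord {u : W} {i : B} (i' : B)
    (hu : ¬cs.IsRightDescent u i) :
    ∃ (v : W) (r : ℕ), u = v * cs.wordProd (alternatingWord i i' r) ∧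
      cs.length u = cs.length v + r ∧ ¬cs.IsRightDescent v i ∧ ¬cs.IsRightDescent v i' := by
  induction hℓ : cs.length u using Nat.strong_induction_on generalizing u i i' with
  | _ n ih =>
  by_cases hu' : cs.IsRightDescent u i'
  · have hℓ' := cs.isRightDescent_iff.mp hu'
    have hu's : ¬cs.IsRightDescent (u * cs.simple i') i' := by
      rwa [← isRightDescent_iff_not_isRightDescent_mul]
    obtain ⟨v, r, hv, hℓv, hvi', hvi⟩ := ih _ (by omega) i hu's rfl
    refine ⟨v, r + 1, ?_, by omega, hvi, hvi'⟩
    rw [alternatingWord_succ, wordProd_concat, ← mul_assoc, ← hv, simple_mul_simple_cancel_right]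
  · exact ⟨u, 0, by simp [alternatingWord], hℓ.symm, hu, hu'⟩

theorem add_one_le_of_eq_mul_wordProd_alternatingWord {u v : W} {i i' : B} {r : ℕ}
    (hu : ¬cs.IsRightDescent u i) (huv : u = v * cs.wordProd (alternatingWord i i' r))
    (hℓ : cs.length u = cs.length v + r) (hM : M i i' ≠ 0) : r + 1 ≤ M i i' := by
  by_contra! hr
  refine cs.not_isReduced_alternatingWord i' i (by rwa [M.symmetric]) (by rw [M.symmetric]; omega)
    (le_antisymm (by simpa using cs.length_wordProd_le (alternatingWord i' i (r + 1))) ?_)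
  have hus : u * cs.simple i = v * cs.wordProd (alternatingWord i' i (r + 1)) := by
    rw [alternatingWord_succ, wordProd_concat, ← mul_assoc, huv]
  have := cs.length_mul_le v (cs.wordProd (alternatingWord i' i (r + 1)))
  rw [← hus, cs.not_isRightDescent_iff.mp hu] at this
  simp only [length_alternatingWord]
  omega

theorem length_pow_le (w : W) (n : ℕ) : cs.length (w ^ n) ≤ n * cs.length w := by
  induction n with
  | zero => simp
  | succ n ih =>
    rw [pow_succ, add_one_mul]
    exact (cs.length_mul_le _ _).trans (by omega)

variable {cs}

theorem IsReduced.length_wordProd_take {l : List B} (hl : cs.IsReduced l) {j : ℕ}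
    (hj : j ≤ l.length) : cs.length (cs.wordProd (l.take j)) = j := by
  rw [(hl.take j).eq, List.length_take, min_eq_left hj]

theorem IsReduced.length_wordProd_drop {l : List B} (hl : cs.IsReduced l) (j : ℕ) :
    cs.length (cs.wordProd (l.drop j)) = l.length - j := by
  rw [(hl.drop j).eq, List.length_drop]

theorem wordProd_take_add_one {l : List B} {i : ℕ} (hi : i < l.length) :
    cs.wordProd (l.take (i + 1)) = cs.wordProd (l.take i) * cs.simple l[i] := by
  rw [← List.take_concat_get' l i hi, wordProd_append, wordProd_singleton]

theorem inv_wordProd_mul_wordProd_take (l : List B) (j : ℕ) :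
    (cs.wordProd l)⁻¹ * cs.wordProd (l.take j) = (cs.wordProd (l.drop j))⁻¹ := by
  have hl : cs.wordProd l = cs.wordProd (l.take j) * cs.wordProd (l.drop j) := by
    rw [← wordProd_append, List.take_append_drop]
  rw [hl]
  group

theorem IsReduced.isRightDescent_inv_mul_wordProd_take {l : List B} (hl : cs.IsReduced l)
    {i : ℕ} (hi : i < l.length) :
    cs.IsRightDescent ((cs.wordProd l)⁻¹ * cs.wordProd (l.take i)) l[i] := by
  rw [inv_wordProd_mul_wordProd_take, isRightDescent_inv_iff, IsLeftDescent,
    List.drop_eq_getElem_cons hi, wordProd_cons, simple_mul_simple_cancel_left,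
    hl.length_wordProd_drop, ← wordProd_cons, ← List.drop_eq_getElem_cons hi,
    hl.length_wordProd_drop]
  omega

theorem IsReduced.not_isRightDescent_pow_mul_wordProd_take {l : List B} (hl : cs.IsReduced l)
    {m : ℕ} (hm : cs.length (cs.wordProd l ^ (m + 1)) = (m + 1) * l.length) {i : ℕ}
    (hi : i < l.length) :
    ¬cs.IsRightDescent (cs.wordProd l ^ m * cs.wordProd (l.take i)) l[i] := by
  have hsplit : cs.wordProd l ^ m * cs.wordProd (l.take i) * cs.simple l[i] =
      cs.wordProd l ^ (m + 1) * (cs.wordProd (l.drop (i + 1)))⁻¹ := by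
    rw [mul_assoc, ← wordProd_take_add_one hi, ← inv_wordProd_mul_wordProd_take, pow_succ]
    group
  have hupper := (cs.length_mul_le _ _).trans (add_le_add (cs.length_pow_le (cs.wordProd l) m)
    (hl.length_wordProd_take hi.le).le)
  have hlower := cs.length_le_length_mul_add_right (cs.wordProd l ^ (m + 1))
    (cs.wordProd (l.drop (i + 1)))⁻¹
  rw [← hsplit, length_inv, hl.length_wordProd_drop, hm, add_one_mul] at hlower
  rw [hl.eq] at hupper
  unfold IsRightDescent
  omega

end CoxeterSystem

namespace CoxPaper.GeomRep

open Polynomial Polynomial.Chebyshev CoxeterSystem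

variable {B W V : Type*} [Group W] {M : CoxeterMatrix B} {cs : CoxeterSystem M W}
  [AddCommGroup V] [Module ℝ V] (ρ : GeomRep cs V)

theorem σ_mul_apply (u v : W) (x : V) : ρ.σ (u * v) x = ρ.σ u (ρ.σ v x) := by
  rw [map_mul, Module.End.mul_apply]

theorem BF_e_self (i : B) : ρ.BF (ρ.e i) (ρ.e i) = 1 := by
  simp [ρ.hBF, Real.cos_pi]

theorem BF_e_comm (i j : B) : ρ.BF (ρ.e i) (ρ.e j) = ρ.BF (ρ.e j) (ρ.e i) := by
  rw [ρ.hBF, ρ.hBF, M.symmetric]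

theorem σ_simple_e_self (i : B) : ρ.σ (cs.simple i) (ρ.e i) = -ρ.e i := by
  rw [ρ.hσ, BF_e_self]
  module

theorem σ_simple_e (i j : B) :
    ρ.σ (cs.simple i) (ρ.e j) = ρ.e j + (2 * -ρ.BF (ρ.e j) (ρ.e i)) • ρ.e i := by
  rw [ρ.hσ, BF_e_comm]
  module

theorem σ_alternatingWord_apply_e (i i' : B) (r : ℕ) :
    ρ.σ (cs.wordProd (alternatingWord i i' r)) (ρ.e i) =
      (if Even r then (U ℝ r).eval (-ρ.BF (ρ.e i) (ρ.e i'))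
        else (U ℝ (r - 1)).eval (-ρ.BF (ρ.e i) (ρ.e i'))) • ρ.e i +
      (if Even r then (U ℝ (r - 1)).eval (-ρ.BF (ρ.e i) (ρ.e i'))
        else (U ℝ r).eval (-ρ.BF (ρ.e i) (ρ.e i'))) • ρ.e i' := by
  set c := -ρ.BF (ρ.e i) (ρ.e i')
  induction r with
  | zero => simp [alternatingWord]
  | succ n ih =>
    have hU : (U ℝ (n + 1)).eval c = 2 * c * (U ℝ n).eval c - (U ℝ (n - 1)).eval c := by
      simp [U_add_one]
    rw [alternatingWord_succ', wordProd_cons, σ_mul_apply, ih]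
    simp only [Nat.cast_add_one, add_sub_cancel_right, Nat.even_add_one]
    by_cases hn : Even n
    · simp only [hn, not_true, if_true, if_false, map_add, map_smul, σ_simple_e_self,
        σ_simple_e ρ i' i, hU]
      module
    · simp only [hn, not_false_eq_true, if_true, if_false, map_add, map_smul, σ_simple_e_self,
        σ_simple_e ρ i i', hU, BF_e_comm ρ i' i]
      module

theorem U_eval_neg_BF_e_nonneg {i i' : B} (h : i ≠ i') {n : ℤ} (hn : 0 ≤ n + 1)
    (hM : M i i' = 0 ∨ n + 1 ≤ M i i') : 0 ≤ (U ℝ n).eval (-ρ.BF (ρ.e i) (ρ.e i')) := by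
  rw [ρ.hBF]
  split_ifs with h0
  · rw [neg_neg, U_eval_one]
    exact_mod_cast hn
  · have hm : (2 : ℝ) ≤ M i i' := by have := M.off_diagonal i i' h; norm_cast; omega
    have hθ : 0 < Real.pi / M i i' := by positivity
    rw [neg_neg]
    refine U_real_cos_nonneg ⟨hθ, ?_⟩ hn ?_
    · rw [div_lt_iff₀ (by linarith)]; nlinarith [Real.pi_pos]
    · have : (n + 1 : ℝ) ≤ M i i' := by exact_mod_cast hM.resolve_left h0
      calc (n + 1 : ℝ) * (Real.pi / M i i') ≤ M i i' * (Real.pi / M i i') := by gcongr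
        _ = Real.pi := by field_simp

theorem repr_σ_apply_e_nonneg {u : W} {i : B} (hu : ¬cs.IsRightDescent u i) (j : B) :
    0 ≤ ρ.e.repr (ρ.σ u (ρ.e i)) j := by
  induction hℓ : cs.length u using Nat.strong_induction_on generalizing u i with
  | _ n ih =>
  obtain rfl | hu1 := eq_or_ne u 1
  · rw [map_one, Module.End.one_apply, Module.Basis.repr_self]
    exact Finsupp.single_nonneg.mpr zero_le_one j
  obtain ⟨i', hi'⟩ := cs.exists_rightDescent_of_ne_one hu1
  have hii' : i ≠ i' := by rintro rfl; exact hu hi'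
  obtain ⟨v, r, rfl, hℓv, hvi, hvi'⟩ := cs.exists_eq_mul_wordProd_alternatingWord i' hu
  have hr : r ≠ 0 := by rintro rfl; simp [alternatingWord] at hi'; exact hvi' hi'
  have hU (k : ℤ) (hk : 0 ≤ k + 1) (hkr : k ≤ r) :
      0 ≤ (U ℝ k).eval (-ρ.BF (ρ.e i) (ρ.e i')) := by
    refine ρ.U_eval_neg_BF_e_nonneg hii' hk ((eq_or_ne (M i i') 0).imp_right fun h0 => ?_)
    have := cs.add_one_le_of_eq_mul_wordProd_alternatingWord hu rfl hℓv h0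
    omega
  have hvj := ih _ (by omega) hvi rfl
  have hv'j := ih _ (by omega) hvi' rfl
  rw [σ_mul_apply, σ_alternatingWord_apply_e]
  simp only [map_add, map_smul, Finsupp.add_apply, Finsupp.smul_apply, smul_eq_mul]
  have h0 := hU r (by omega) le_rfl
  have h1 := hU (r - 1) (by omega) (by omega)
  split_ifs <;> positivity

theorem isPos_σ_apply_e {u : W} {i : B} (hu : ¬cs.IsRightDescent u i) :
    ρ.IsPos (ρ.σ u (ρ.e i)) :=
  ⟨⟨u, i, rfl⟩, ρ.repr_σ_apply_e_nonneg hu⟩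

theorem isNeg_σ_apply_e {u : W} {i : B} (hu : cs.IsRightDescent u i) :
    ρ.IsNeg (ρ.σ u (ρ.e i)) := by
  refine ⟨⟨u, i, rfl⟩, fun j => ?_⟩
  have hσ : ρ.σ u (ρ.e i) = -ρ.σ (u * cs.simple i) (ρ.e i) := by
    rw [σ_mul_apply, σ_simple_e_self, map_neg, neg_neg]
  rw [hσ, map_neg, Finsupp.neg_apply, neg_nonpos]
  exact ρ.repr_σ_apply_e_nonneg (cs.isRightDescent_iff_not_isRightDescent_mul.mp hu) j

end CoxPaper.GeomRep

open CoxPaper in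
/-- For a straight element `w` with reduced expression `s_{j_1} ⋯ s_{j_k}` and roots
`β_i = s_{j_1} ⋯ s_{j_{i-1}}(e_{j_i})`: each `β_i` lies in `Φ⁺(w⁻¹)`, and `wᵐ(β_i)` is a
positive root for all `m ≥ 1` (so `β_i ∉ Φ⁺(wᵐ)`). -/
theorem stmt_8 {B W : Type*} [Group W] {M : CoxeterMatrix B}
    (cs : CoxeterSystem M W) {V : Type*} [AddCommGroup V] [Module ℝ V]
    (ρ : GeomRep cs V) {w : W} (hw : IsStraight cs w)
    (l : List B) (hred : cs.IsReduced l) (hprod : cs.wordProd l = w)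
    (i : Fin l.length) :
    ρ.IsPos (ρ.σ (cs.wordProd (l.take i)) (ρ.e (l.get i))) ∧
    ρ.IsNeg (ρ.σ w⁻¹ (ρ.σ (cs.wordProd (l.take i)) (ρ.e (l.get i)))) ∧
    ∀ m : ℕ, 1 ≤ m →
      ρ.IsPos (ρ.σ (w ^ m) (ρ.σ (cs.wordProd (l.take i)) (ρ.e (l.get i)))) := by
  subst hprod
  have hpow (m : ℕ) :
      ρ.IsPos (ρ.σ (cs.wordProd l ^ m) (ρ.σ (cs.wordProd (l.take i)) (ρ.e l[i]))) := by
    rw [← GeomRep.σ_mul_apply]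
    refine ρ.isPos_σ_apply_e (hred.not_isRightDescent_pow_mul_wordProd_take ?_ i.isLt)
    have := hw (m + 1 : ℕ)
    rwa [zpow_natCast, Int.natAbs_natCast, hred.eq] at this
  refine ⟨by simpa using hpow 0, ?_, fun m _ => hpow m⟩
  rw [List.get_eq_getElem, ← GeomRep.σ_mul_apply]
  exact ρ.isNeg_σ_apply_e (hred.isRightDescent_inv_mul_wordProd_take i.isLt)
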